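/- Let v be a smooth vector field on 𝕋^d with Lipschitz constant M, and f a smooth function satisfying f(z₁) - f(z₂) ≤ K(|z₁-z₂| + ε) for all z₁, z₂, with equality at a pair (x,y). Then (v·∇f)(x) - (v·∇f)(y) ≤ K M |x-y|. -/

import Mathlib

open MeasureTheory Real Filter Set Topology

noncomputable section

/-- `ℝ^d`, the ambient space; the torus `𝕋^d` is modeled by `2π`-periodic functions on it. -/
abbrev E (d : ℕ) := EuclideanSpace ℝ (Fin d)

/-- A fundamental domain `[-π,π)^d` for the torus `𝕋^d`. -/
def Torus (d : ℕ) : Set (E d) := (WithLp.equiv 2 (Fin d → ℝ)) ⁻¹' Set.univ.pi fun _ => Set.Ico (-π) π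

def toE (d : ℕ) (v : Fin d → ℝ) : E d := (WithLp.equiv 2 (Fin d → ℝ)).symm v

/-- The lattice point `2πn ∈ ℝ^d`. -/
def latt (d : ℕ) (n : Fin d → ℤ) : E d := toE d fun i => 2 * π * (n i : ℝ)

/-- A function on `ℝ^d` descends to the torus iff it is `2πℤ^d`-periodic. -/
def TorusPeriodic (d : ℕ) (f : E d → ℝ) : Prop :=
  ∀ (x : E d) (n : Fin d → ℤ), f (x + latt d n) = f x

/-- at a breaking point `(x,y)` of the modulus `K(|·| + ε)`, the drift term
of an `M`-Lipschitz vector field satisfies `(v·∇f)(x) - (v·∇f)(y) ≤ K M |x-y|`. -/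
theorem stmt11 (d : ℕ) (M K ε : ℝ) (hM : 0 ≤ M) (hK : 0 < K) (hε : 0 < ε)
    (v : E d → E d) (hv : ContDiff ℝ (⊤ : ℕ∞) v)
    (hvlip : ∀ x y : E d, ‖v x - v y‖ ≤ M * ‖x - y‖)
    (f : E d → ℝ) (hf : ContDiff ℝ (⊤ : ℕ∞) f)
    (hmod : ∀ z₁ z₂ : E d, f z₁ - f z₂ ≤ K * (‖z₁ - z₂‖ + ε))
    (x y : E d) (heq : f x - f y = K * (‖x - y‖ + ε)) :
    fderiv ℝ f x (v x) - fderiv ℝ f y (v y) ≤ K * M * ‖x - y‖ := by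

  set g : ℝ → ℝ := fun h => f (x + h • v x) - f (y + h • v y) with hg
  have hfd := hf.differentiable (by simp)
  have hcx : HasDerivAt (fun h : ℝ => x + h • v x) (v x) 0 := by
    simpa using ((hasDerivAt_id (0:ℝ)).smul_const (v x)).const_add x
  have hcy : HasDerivAt (fun h : ℝ => y + h • v y) (v y) 0 := by
    simpa using ((hasDerivAt_id (0:ℝ)).smul_const (v y)).const_add y
  have hdx : HasDerivAt (fun h : ℝ => f (x + h • v x)) (fderiv ℝ f x (v x)) 0 := by
    have h0 : HasFDerivAt f (fderiv ℝ f x) (x + (0:ℝ) • v x) := by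
      simpa using (hfd x).hasFDerivAt
    exact h0.comp_hasDerivAt 0 hcx
  have hdy : HasDerivAt (fun h : ℝ => f (y + h • v y)) (fderiv ℝ f y (v y)) 0 := by
    have h0 : HasFDerivAt f (fderiv ℝ f y) (y + (0:ℝ) • v y) := by
      simpa using (hfd y).hasFDerivAt
    exact h0.comp_hasDerivAt 0 hcy
  have hd : HasDerivAt g (fderiv ℝ f x (v x) - fderiv ℝ f y (v y)) 0 := hdx.sub hdy
  have hslope : Tendsto (slope g 0) (𝓝[>] 0)
      (𝓝 (fderiv ℝ f x (v x) - fderiv ℝ f y (v y))) :=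
    (hasDerivAt_iff_tendsto_slope.mp hd).mono_left
      (nhdsWithin_mono _ (fun h hh => ne_of_gt hh))
  refine le_of_tendsto hslope ?_
  filter_upwards [self_mem_nhdsWithin] with h (hh : 0 < h)
  have key : g h - g 0 ≤ h * (K * M * ‖x - y‖) := by
    have h1 : g h ≤ K * (‖(x - y) + h • (v x - v y)‖ + ε) := by
      have := hmod (x + h • v x) (y + h • v y)
      have e : x + h • v x - (y + h • v y) = (x - y) + h • (v x - v y) := by
        rw [smul_sub]; abel
      rw [e] at this
      exact this
    have h2 : ‖(x - y) + h • (v x - v y)‖ ≤ ‖x - y‖ + h * (M * ‖x - y‖) := by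
      calc ‖(x - y) + h • (v x - v y)‖ ≤ ‖x - y‖ + ‖h • (v x - v y)‖ := norm_add_le _ _
        _ = ‖x - y‖ + h * ‖v x - v y‖ := by
            rw [norm_smul, Real.norm_eq_abs, abs_of_pos hh]
        _ ≤ ‖x - y‖ + h * (M * ‖x - y‖) := by
            gcongr; exact hvlip x y
    have h0 : g 0 = K * (‖x - y‖ + ε) := by simpa [g] using heq
    have : g h - g 0 ≤ K * (‖x - y‖ + h * (M * ‖x - y‖) + ε) - K * (‖x - y‖ + ε) := by
      rw [h0]
      have hle : K * (‖(x - y) + h • (v x - v y)‖ + ε) ≤ K * (‖x - y‖ + h * (M * ‖x - y‖) + ε) := by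
        have : ‖(x - y) + h • (v x - v y)‖ + ε ≤ ‖x - y‖ + h * (M * ‖x - y‖) + ε := by linarith
        exact mul_le_mul_of_nonneg_left this hK.le
      linarith [h1.trans hle]
    calc g h - g 0 ≤ K * (‖x - y‖ + h * (M * ‖x - y‖) + ε) - K * (‖x - y‖ + ε) := this
      _ = h * (K * M * ‖x - y‖) := by ring
  have hsl : slope g 0 h = (g h - g 0) / h := by
    simp [slope_def_field]
  rw [hsl, div_le_iff₀ hh]
  linarith [key]
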